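/- arXiv:1612.07641 — 2 statements merged into one kernel-verified Lean document; each statement's English description precedes it below -/
import Mathlib

section
/- Let n ≥ 1 and let J = (j_1,…,j_{2n}) be a list such that every value j occurring in J occurs an even number m_j of times. Then the number of pair partitions τ = {{a_1,b_1},…,{a_n,b_n}} ∈ M_{2n} with δ_J(τ) = 1 (i.e., pairing only positions carrying equal values of J) equals ∏_j (m_j − 1)!!, the product over the distinct values j occurring in J, where (2k−1)!! = 1·3·5⋯(2k−1). -/
open Equiv Finset

def pairInv (n : ℕ) : Fin (2*n) → Fin (2*n) :=
  fun x => ⟨2 * (x.val / 2) + (1 - x.val % 2), by omega⟩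

lemma pairInv_involutive (n : ℕ) : Function.Involutive (pairInv n) := by
  intro x
  apply Fin.ext
  simp only [pairInv]
  omega

/-- The graph Γ(σ): red edges {2k,2k+1} (0-indexed) and blue edges {σ(2k),σ(2k+1)}. -/
def gammaGraph {n : ℕ} (σ : Perm (Fin (2*n))) : SimpleGraph (Fin (2*n)) where
  Adj x y := x ≠ y ∧ (pairInv n x = y ∨ pairInv n (σ⁻¹ x) = σ⁻¹ y)
  symm := by
    constructor
    rintro x y ⟨hxy, h | h⟩
    · exact ⟨hxy.symm, Or.inl (by rw [← h, pairInv_involutive])⟩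
    · exact ⟨hxy.symm, Or.inr (by rw [← h, pairInv_involutive])⟩
  loopless := by constructor; rintro x ⟨hx, -⟩; exact hx rfl

instance {n : ℕ} (σ : Perm (Fin (2*n))) : DecidableRel (gammaGraph σ).Adj :=
  fun x y => inferInstanceAs (Decidable (x ≠ y ∧ (pairInv n x = y ∨ pairInv n (σ⁻¹ x) = σ⁻¹ y)))

/-- The coset-type of σ ∈ S_{2n}: the multiset of half-sizes of the connected
components of Γ(σ). -/
noncomputable def cosetType {n : ℕ} (σ : Perm (Fin (2*n))) : Multiset ℕ := by
  classical
  exact (Finset.univ : Finset (gammaGraph σ).ConnectedComponent).val.map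
    (fun c => (Finset.univ.filter fun v => (gammaGraph σ).connectedComponentMk v = c).card / 2)

/-- σ ∈ M_{2n}: the permutation (in one-line notation a₁ b₁ a₂ b₂ ⋯) of a pair partition,
i.e. σ(2k) < σ(2k+1) and σ(0) < σ(2) < ⋯ (0-indexed). -/
def isPairPerm {n : ℕ} (σ : Perm (Fin (2*n))) : Prop :=
  (∀ (k : ℕ) (h : k < n), σ ⟨2*k, by omega⟩ < σ ⟨2*k+1, by omega⟩) ∧
  (∀ (k : ℕ) (h : k+1 < n), σ ⟨2*k, by omega⟩ < σ ⟨2*k+2, by omega⟩)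

/-- δ_I(σ) = 1 : the pair partition σ pairs only positions carrying equal values of I. -/
def pairsEq {n : ℕ} {α : Type*} (I : Fin (2*n) → α) (σ : Perm (Fin (2*n))) : Prop :=
  ∀ (k : ℕ) (h : k < n), I (σ ⟨2*k, by omega⟩) = I (σ ⟨2*k+1, by omega⟩)

/-- C(λ): the number of pair partitions in M_{2n} with coset-type λ. -/
noncomputable def CC (n : ℕ) (lam : Multiset ℕ) : ℕ :=
  Nat.card {σ : Perm (Fin (2*n)) // isPairPerm σ ∧ cosetType σ = lam}


/-!
A pair partition τ ∈ M_{2n}, read as a permutation in one-line notation, is determined by the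
fixed-point-free involution `f` exchanging `τ (2k)` and `τ (2k+1)`: the openers `τ (2k)` are
exactly the points `x` with `x < f x`, listed in increasing order. Conversely every fixed-point-free
involution arises this way, and `δ_J(τ) = 1` says that the involution preserves `J`. Such an
involution is the same as a fixed-point-free involution on each fibre of `J`, and on a set with
`2m` elements there are `(2m-1)‼` of them: the partner of a given point `a` can be chosen in
`2m - 1` ways, and what remains is a fixed-point-free involution on `2m - 2` points.
-/

open scoped Nat

namespace Equiv.Perm

variable {α : Type*}

def IsFixedPointFreeInvolution (σ : Perm α) : Prop :=
  ∀ x, σ (σ x) = x ∧ σ x ≠ x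

section Swap

variable [DecidableEq α]

theorem disjoint_swap_of_apply_eq {τ : Perm α} {a b : α} (ha : τ a = a) (hb : τ b = b) :
    Disjoint (swap a b) τ := by
  intro x
  by_cases hx : x = a ∨ x = b
  · rcases hx with rfl | rfl <;> simp [ha, hb]
  · push Not at hx
    exact Or.inl (swap_apply_of_ne_of_ne hx.1 hx.2)

theorem mul_self_swap_apply_mul_eq_one {σ : Perm α} (hσ : σ * σ = 1) (a : α) :
    (swap a (σ a) * σ) * (swap a (σ a) * σ) = 1 := by
  have hσa : σ (σ a) = a := by rw [← mul_apply, hσ, one_apply]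
  have hcomm : σ * swap a (σ a) * σ = swap (σ a) a :=
    calc σ * swap a (σ a) * σ = σ * swap a (σ a) * σ⁻¹ := by rw [inv_eq_of_mul_eq_one_right hσ]
      _ = swap (σ a) a := by rw [← swap_apply_apply, hσa]
  rw [mul_assoc, ← mul_assoc σ, hcomm, swap_comm, swap_mul_self]

theorem mul_self_swap_mul_eq_one {τ : Perm α} (hτ : τ * τ = 1) {a b : α} (ha : τ a = a)
    (hb : τ b = b) : (swap a b * τ) * (swap a b * τ) = 1 := by
  rw [(disjoint_swap_of_apply_eq ha hb).commute.symm.mul_mul_mul_comm, swap_mul_self, hτ, one_mul]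

end Swap

section Support

variable [DecidableEq α] [Fintype α]

theorem support_swap_apply_mul {σ : Perm α} (hσ : σ * σ = 1) (a : α) :
    (swap a (σ a) * σ).support = (σ.support.erase a).erase (σ a) := by
  have hσσ (x : α) : σ (σ x) = x := by rw [← mul_apply, hσ, one_apply]
  ext x
  simp only [mem_support, mem_erase, mul_apply, swap_apply_def]
  by_cases hxa : x = a
  · subst hxa; simp
  by_cases hxb : x = σ a
  · subst hxb; simp [hσσ]
  have : σ x ≠ a := fun h => hxb (by rw [← h, hσσ])
  have : σ x ≠ σ a := fun h => hxa (σ.injective h)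
  simp_all

theorem support_swap_mul_of_apply_eq {τ : Perm α} {a b : α} (hab : a ≠ b) (ha : τ a = a)
    (hb : τ b = b) : (swap a b * τ).support = insert a (insert b τ.support) := by
  rw [(disjoint_swap_of_apply_eq ha hb).support_mul, support_swap hab, insert_eq, insert_eq,
    union_assoc]
  rfl

def involutionsWithSupportEquivSigma {s : Finset α} {a : α} (ha : a ∈ s) :
    {σ : Perm α // σ * σ = 1 ∧ σ.support = s} ≃
      Σ b : s.erase a, {τ : Perm α // τ * τ = 1 ∧ τ.support = (s.erase a).erase b} where
  toFun σ := ⟨⟨σ.1 a, by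
      obtain ⟨σ, -, rfl⟩ := σ
      exact mem_erase.2 ⟨mem_support.1 ha, apply_mem_support.2 ha⟩⟩,
    ⟨swap a (σ.1 a) * σ.1, mul_self_swap_apply_mul_eq_one σ.2.1 a, by
      rw [support_swap_apply_mul σ.2.1, σ.2.2]⟩⟩
  invFun τ := ⟨swap a τ.1 * τ.2.1, by
    obtain ⟨⟨b, hb⟩, τ, hτ, hsupp⟩ := τ
    have hτa : τ a = a := notMem_support.1 (by simp [hsupp])
    have hτb : τ b = b := notMem_support.1 (by simp [hsupp])
    refine ⟨mul_self_swap_mul_eq_one hτ hτa hτb, ?_⟩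
    rw [support_swap_mul_of_apply_eq (ne_of_mem_erase hb).symm hτa hτb, hsupp, insert_erase hb,
      insert_erase ha]⟩
  left_inv σ := Subtype.ext (swap_mul_self_mul _ _ _)
  right_inv := by
    rintro ⟨⟨b, hb⟩, τ, hτ, hsupp⟩
    have hτa : τ a = a := notMem_support.1 (by simp [hsupp])
    have hab : (swap a b * τ) a = b := by rw [mul_apply, hτa, swap_apply_left]
    refine Sigma.subtype_ext (Subtype.ext hab) ?_
    simp only [hab, swap_mul_self_mul]

theorem card_involutions_with_support {s : Finset α} (hs : Even s.card) :
    Nat.card {σ : Perm α // σ * σ = 1 ∧ σ.support = s} = (s.card - 1)‼ := by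
  induction s using Finset.strongInduction with
  | _ s ih =>
  rcases s.eq_empty_or_nonempty with rfl | ⟨a, ha⟩
  · refine Nat.card_eq_one_iff_exists.2 ⟨⟨1, one_mul 1, support_one⟩, ?_⟩
    rintro ⟨σ, -, hσ⟩
    exact Subtype.ext (support_eq_empty_iff.1 hσ)
  obtain ⟨k, hk⟩ : ∃ k, s.card = 2 * k + 2 := by
    obtain ⟨m, hm⟩ := hs
    have := card_pos.2 ⟨a, ha⟩
    exact ⟨m - 1, by omega⟩
  have hfiber (b : s.erase a) :
      Nat.card {τ : Perm α // τ * τ = 1 ∧ τ.support = (s.erase a).erase b} = (2 * k - 1)‼ := by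
    have hcard : ((s.erase a).erase b).card = 2 * k := by
      rw [card_erase_of_mem b.2, card_erase_of_mem ha]
      omega
    rw [ih _ ((erase_subset _ _).trans_ssubset (erase_ssubset ha))
      (by rw [hcard]; exact even_two_mul k), hcard]
  rw [Nat.card_congr (involutionsWithSupportEquivSigma ha), Nat.card_sigma,
    sum_congr rfl fun b _ => hfiber b, sum_const, Finset.card_univ, Fintype.card_coe,
    card_erase_of_mem ha, hk, smul_eq_mul, show 2 * k + 2 - 1 = 2 * k + 1 by omega,
    Nat.doubleFactorial_add_one]

theorem mul_self_eq_one_and_support_eq_univ_iff (σ : Perm α) :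
    σ * σ = 1 ∧ σ.support = univ ↔ σ.IsFixedPointFreeInvolution := by
  simp only [IsFixedPointFreeInvolution, Perm.ext_iff, mul_apply, one_apply, eq_univ_iff_forall,
    mem_support, forall_and]

theorem card_isFixedPointFreeInvolution (h : Even (Fintype.card α)) :
    Nat.card {σ : Perm α // σ.IsFixedPointFreeInvolution} = (Fintype.card α - 1)‼ := by
  rw [← Finset.card_univ] at h ⊢
  simp only [← mul_self_eq_one_and_support_eq_univ_iff]
  exact card_involutions_with_support h

end Support

section Fiberwise

variable {ι : Type*}

def fiberwisePermEquiv (J : α → ι) : {σ : Perm α // J ∘ σ = J} ≃ Π i, Perm {a // J a = i} :=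
  ((subtypeEquiv DomMulAct.mk fun _ => Iff.rfl).trans MulOpposite.opEquiv).trans
    (DomMulAct.stabilizerMulEquiv J).toEquiv

theorem coe_fiberwisePermEquiv_apply (J : α → ι) (σ : {σ : Perm α // J ∘ σ = J}) (i : ι)
    (a : {a // J a = i}) : (fiberwisePermEquiv J σ i a : α) = σ.1 a := rfl

theorem isFixedPointFreeInvolution_iff_fiberwise (J : α → ι) (σ : {σ : Perm α // J ∘ σ = J}) :
    σ.1.IsFixedPointFreeInvolution ↔
      ∀ i, (fiberwisePermEquiv J σ i).IsFixedPointFreeInvolution := by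
  simp only [IsFixedPointFreeInvolution, ne_eq, Subtype.ext_iff, coe_fiberwisePermEquiv_apply]
  exact ⟨fun h i a => h a, fun h a => h (J a) ⟨a, rfl⟩⟩

theorem card_isFixedPointFreeInvolution_comp_eq_prod [Fintype ι] (J : α → ι) :
    Nat.card {σ : Perm α // J ∘ σ = J ∧ σ.IsFixedPointFreeInvolution} =
      ∏ i, Nat.card {τ : Perm {a // J a = i} // τ.IsFixedPointFreeInvolution} := by
  rw [← Nat.card_pi, ← Nat.card_congr (subtypeSubtypeEquivSubtypeInter _ _),
    Nat.card_congr ((subtypeEquiv (fiberwisePermEquiv J)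
      (isFixedPointFreeInvolution_iff_fiberwise J)).trans
      (subtypePiEquivPi (p := fun i (τ : Perm {a // J a = i}) => τ.IsFixedPointFreeInvolution)))]

theorem card_isFixedPointFreeInvolution_comp_eq [DecidableEq α] [Fintype α] [DecidableEq ι]
    (J : α → ι) (hJ : ∀ i, Even (univ.filter fun a => J a = i).card) :
    Nat.card {σ : Perm α // J ∘ σ = J ∧ σ.IsFixedPointFreeInvolution} =
      ∏ i ∈ univ.image J, ((univ.filter fun a => J a = i).card - 1)‼ := by
  let J' (a : α) : univ.image J := ⟨J a, mem_image_of_mem J (mem_univ a)⟩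
  have hJ' (a : α) (i : univ.image J) : J' a = i ↔ J a = i := Subtype.ext_iff
  have hcomp (σ : Perm α) : J' ∘ σ = J' ↔ J ∘ σ = J := by
    simp only [funext_iff, Function.comp_apply, hJ', J']
  rw [← Nat.card_congr (subtypeEquivRight fun σ => and_congr_left' (hcomp σ)),
    card_isFixedPointFreeInvolution_comp_eq_prod J', ← prod_coe_sort (univ.image J)]
  refine prod_congr rfl fun i _ => ?_
  have hcard : Fintype.card {a // J' a = i} = (univ.filter fun a => J a = i).card := by
    rw [Fintype.card_subtype]
    simp only [hJ']
  rw [card_isFixedPointFreeInvolution (hcard ▸ hJ i), hcard]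

end Fiberwise

namespace IsFixedPointFreeInvolution

theorem two_mul_card_filter_lt_apply [LinearOrder α] [Fintype α] {f : Perm α}
    (hf : f.IsFixedPointFreeInvolution) :
    2 * (univ.filter fun x => x < f x).card = Fintype.card α := by
  have hswap : (univ.filter fun x => x < f x).card = (univ.filter fun x => ¬ x < f x).card := by
    refine card_nbij' f f (fun x hx => ?_) (fun x hx => ?_) (fun x _ => (hf x).1)
      (fun x _ => (hf x).1)
    · simp only [coe_filter, mem_univ, true_and, Set.mem_ofPred_eq, not_lt, (hf x).1] at hx ⊢
      exact hx.le
    · simp only [coe_filter, mem_univ, true_and, Set.mem_ofPred_eq, not_lt, (hf x).1] at hx ⊢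
      exact hx.lt_of_ne (hf x).2
  rw [← Finset.card_univ, ← card_filter_add_card_filter_not (s := univ) (fun x => x < f x),
    ← hswap, two_mul]

end IsFixedPointFreeInvolution

end Equiv.Perm

namespace Fin

theorem forall_of_forall_two_mul {n : ℕ} {P : Fin (2 * n) → Prop}
    (h : ∀ k (hk : k < n), P ⟨2 * k, by omega⟩ ∧ P ⟨2 * k + 1, by omega⟩) : ∀ i, P i := by
  intro ⟨i, hi⟩
  obtain ⟨h0, h1⟩ := h (i / 2) (by omega)
  rcases Nat.mod_two_eq_zero_or_one i with hi2 | hi2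
  · convert h0 using 2; omega
  · convert h1 using 2; omega

theorem strictMono_of_forall_lt_succ {n : ℕ} {α : Type*} [Preorder α] {f : Fin n → α}
    (h : ∀ k (hk : k + 1 < n), f ⟨k, by omega⟩ < f ⟨k + 1, hk⟩) : StrictMono f := by
  cases n with
  | zero => exact fun i => i.elim0
  | succ m => exact strictMono_iff_lt_succ.2 fun i => h i (by omega)

end Fin

section PairPartitions

open Equiv.Perm

variable {n : ℕ}

theorem pairInv_two_mul (k : ℕ) (hk : k < n) :
    pairInv n ⟨2 * k, by omega⟩ = ⟨2 * k + 1, by omega⟩ :=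
  Fin.ext (by simp only [pairInv]; omega)

theorem pairInv_two_mul_add_one (k : ℕ) (hk : k < n) :
    pairInv n ⟨2 * k + 1, by omega⟩ = ⟨2 * k, by omega⟩ :=
  Fin.ext (by simp only [pairInv]; omega)

theorem pairInv_ne (i : Fin (2 * n)) : pairInv n i ≠ i :=
  fun h => by have := congrArg Fin.val h; simp only [pairInv] at this; omega

def pairing (τ : Perm (Fin (2 * n))) : Perm (Fin (2 * n)) :=
  τ * (pairInv_involutive n).toPerm * τ⁻¹

theorem pairing_apply_apply (τ : Perm (Fin (2 * n))) (i : Fin (2 * n)) :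
    pairing τ (τ i) = τ (pairInv n i) := by
  simp [pairing]

theorem isFixedPointFreeInvolution_pairing (τ : Perm (Fin (2 * n))) :
    (pairing τ).IsFixedPointFreeInvolution := by
  intro x
  obtain ⟨i, rfl⟩ := τ.surjective x
  rw [pairing_apply_apply, pairing_apply_apply, pairInv_involutive]
  exact ⟨rfl, fun h => pairInv_ne i (τ.injective h)⟩

theorem pairsEq_iff_comp_pairing {α : Type*} (J : Fin (2 * n) → α) (τ : Perm (Fin (2 * n))) :
    pairsEq J τ ↔ J ∘ pairing τ = J := by
  rw [funext_iff, τ.surjective.forall]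
  simp only [Function.comp_apply, pairing_apply_apply]
  refine ⟨fun h => Fin.forall_of_forall_two_mul fun k hk => ?_, fun h k hk => ?_⟩
  · rw [pairInv_two_mul k hk, pairInv_two_mul_add_one k hk]
    exact ⟨(h k hk).symm, h k hk⟩
  · simpa only [pairInv_two_mul k hk] using (h ⟨2 * k, by omega⟩).symm

namespace Equiv.Perm.IsFixedPointFreeInvolution

variable {f : Perm (Fin (2 * n))}

theorem card_filter_lt_apply (hf : f.IsFixedPointFreeInvolution) :
    (univ.filter fun x => x < f x).card = n := by
  have := hf.two_mul_card_filter_lt_apply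
  rw [Fintype.card_fin] at this
  omega

def opener (hf : f.IsFixedPointFreeInvolution) : Fin n ↪o Fin (2 * n) :=
  (univ.filter fun x => x < f x).orderEmbOfFin hf.card_filter_lt_apply

theorem opener_lt_apply (hf : f.IsFixedPointFreeInvolution) (k : Fin n) :
    hf.opener k < f (hf.opener k) :=
  (mem_filter.1 (orderEmbOfFin_mem _ hf.card_filter_lt_apply k)).2

theorem opener_ne_apply_opener (hf : f.IsFixedPointFreeInvolution) (k l : Fin n) :
    hf.opener k ≠ f (hf.opener l) := by
  intro h
  have hk := hf.opener_lt_apply k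
  rw [h, (hf _).1] at hk
  exact lt_asymm hk (hf.opener_lt_apply l)

noncomputable def pairPerm (hf : f.IsFixedPointFreeInvolution) : Perm (Fin (2 * n)) :=
  Equiv.ofBijective (fun i => if i.val % 2 = 0 then hf.opener ⟨i / 2, by omega⟩
      else f (hf.opener ⟨i / 2, by omega⟩)) <| Finite.injective_iff_bijective.1 fun i j hij => by
    have hopen := hf.opener.injective
    split_ifs at hij
    · have := Fin.mk.inj_iff.1 (hopen hij); exact Fin.ext (by omega)
    · exact absurd hij (hf.opener_ne_apply_opener _ _)
    · exact absurd hij.symm (hf.opener_ne_apply_opener _ _)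
    · have := Fin.mk.inj_iff.1 (hopen (f.injective hij)); exact Fin.ext (by omega)

theorem pairPerm_two_mul (hf : f.IsFixedPointFreeInvolution) (k : ℕ) (hk : k < n) :
    hf.pairPerm ⟨2 * k, by omega⟩ = hf.opener ⟨k, hk⟩ := by
  simp [pairPerm]

theorem pairPerm_two_mul_add_one (hf : f.IsFixedPointFreeInvolution) (k : ℕ) (hk : k < n) :
    hf.pairPerm ⟨2 * k + 1, by omega⟩ = f (hf.opener ⟨k, hk⟩) := by
  simp [pairPerm, show (2 * k + 1) / 2 = k by omega]

theorem isPairPerm_pairPerm (hf : f.IsFixedPointFreeInvolution) : isPairPerm hf.pairPerm := by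
  refine ⟨fun k hk => ?_, fun k hk => ?_⟩
  · rw [hf.pairPerm_two_mul k hk, hf.pairPerm_two_mul_add_one k hk]
    exact hf.opener_lt_apply _
  · have : (⟨2 * k + 2, by omega⟩ : Fin (2 * n)) = ⟨2 * (k + 1), by omega⟩ :=
      Fin.ext (mul_add_one 2 k).symm
    rw [this, hf.pairPerm_two_mul k (by omega), hf.pairPerm_two_mul (k + 1) hk]
    exact hf.opener.strictMono (Fin.mk_lt_mk.2 k.lt_succ_self)

theorem pairing_pairPerm (hf : f.IsFixedPointFreeInvolution) : pairing hf.pairPerm = f := by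
  ext1 x
  obtain ⟨i, rfl⟩ := hf.pairPerm.surjective x
  revert i
  refine Fin.forall_of_forall_two_mul fun k hk => ?_
  rw [pairing_apply_apply, pairing_apply_apply, pairInv_two_mul k hk, pairInv_two_mul_add_one k hk,
    hf.pairPerm_two_mul k hk, hf.pairPerm_two_mul_add_one k hk, (hf _).1]
  exact ⟨rfl, rfl⟩

end Equiv.Perm.IsFixedPointFreeInvolution

theorem pairPerm_pairing {τ : Perm (Fin (2 * n))} (hτ : isPairPerm τ) :
    (isFixedPointFreeInvolution_pairing τ).pairPerm = τ := by
  have hopen : (isFixedPointFreeInvolution_pairing τ).opener =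
      fun k : Fin n => τ ⟨2 * k, by omega⟩ := by
    refine (orderEmbOfFin_unique _ (fun k => ?_) ?_).symm
    · rw [mem_filter, pairing_apply_apply, pairInv_two_mul k k.2]
      exact ⟨mem_univ _, hτ.1 k k.2⟩
    · refine Fin.strictMono_of_forall_lt_succ fun k hk => ?_
      exact (hτ.2 k hk).trans_eq (congrArg τ (Fin.ext (mul_add_one 2 k).symm))
  ext1 i
  revert i
  refine Fin.forall_of_forall_two_mul fun k hk => ?_
  rw [IsFixedPointFreeInvolution.pairPerm_two_mul _ k hk,
    IsFixedPointFreeInvolution.pairPerm_two_mul_add_one _ k hk, hopen, pairing_apply_apply,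
    pairInv_two_mul k hk]
  exact ⟨rfl, rfl⟩

noncomputable def pairPermEquiv {α : Type*} (J : Fin (2 * n) → α) :
    {τ : Perm (Fin (2 * n)) // isPairPerm τ ∧ pairsEq J τ} ≃
      {σ : Perm (Fin (2 * n)) // J ∘ σ = J ∧ σ.IsFixedPointFreeInvolution} where
  toFun τ := ⟨pairing τ.1, (pairsEq_iff_comp_pairing J τ.1).1 τ.2.2,
    isFixedPointFreeInvolution_pairing τ.1⟩
  invFun σ := ⟨σ.2.2.pairPerm, σ.2.2.isPairPerm_pairPerm,
    (pairsEq_iff_comp_pairing J _).2 (by rw [σ.2.2.pairing_pairPerm]; exact σ.2.1)⟩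
  left_inv τ := Subtype.ext (pairPerm_pairing τ.2.1)
  right_inv σ := Subtype.ext σ.2.2.pairing_pairPerm

end PairPartitions

open Nat in
theorem stmt3_general (n : ℕ) (J : Fin (2*n) → ℕ)
    (hJ : ∀ j, Even ((Finset.univ.filter fun k => J k = j).card)) :
    Nat.card {τ : Perm (Fin (2*n)) // isPairPerm τ ∧ pairsEq J τ} =
      ∏ j ∈ Finset.univ.image J, ((Finset.univ.filter fun k => J k = j).card - 1)‼ := by
  rw [Nat.card_congr (pairPermEquiv J)]
  exact Perm.card_isFixedPointFreeInvolution_comp_eq J hJ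

open Nat in
/-- If every value j occurring in the list J = (j₁,…,j_{2n}) occurs an even number m_j of
times, then the number of pair partitions τ ∈ M_{2n} with δ_J(τ) = 1 equals
∏_j (m_j − 1)!!, the product over the distinct values occurring in J. -/
theorem stmt3 (n : ℕ) (hn : 1 ≤ n) (J : Fin (2*n) → ℕ)
    (hJ : ∀ j, Even ((Finset.univ.filter fun k => J k = j).card)) :
    Nat.card {τ : Perm (Fin (2*n)) // isPairPerm τ ∧ pairsEq J τ} =
      ∏ j ∈ Finset.univ.image J, ((Finset.univ.filter fun k => J k = j).card - 1)‼ :=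
  stmt3_general n J hJ
end

section
/- Let I = (i_1,…,i_{2n}) be a list with entries in {1,…,d} and suppose σ_I ∈ M_{2n} satisfies δ_I(σ_I) = 1. For a list L and π ∈ S_{2n}, write L∘π = (l_{π(1)},…,l_{π(2n)}). Then for every σ ∈ M_{2n} (viewed as a permutation): δ_I(σ) = 1 if and only if σ ∈ σ_I · Stab · H_n, where Stab = {γ ∈ S_{2n} : (I∘σ_I)∘γ = I∘σ_I} is the stabilizer of the rearranged list I∘σ_I and H_n is the hyperoctahedral group. -/
open Equiv Finset

/-- The fixed-point-free involution (1 2)(3 4)⋯(2n−1 2n) (0-indexed: 2k ↔ 2k+1). -/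
def pairPerm (n : ℕ) : Perm (Fin (2*n)) :=
  Function.Involutive.toPerm (pairInv n) (pairInv_involutive n)

/-- The hyperoctahedral group H_n: the centralizer in S_{2n} of (1 2)(3 4)⋯(2n−1 2n). -/
def hyperoctahedral (n : ℕ) : Subgroup (Perm (Fin (2*n))) :=
  Subgroup.centralizer {pairPerm n}

/-!
`δ_I(σ) = 1` says that the colouring `I ∘ σ` of the positions is invariant under the
involution `2k ↔ 2k+1`, and `σ_I · Stab` consists of the `π` with `I ∘ π = I ∘ σ_I`. So one has
to show that two invariant colourings in the same `S_{2n}`-orbit lie in the same `H_n`-orbit.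
Each is a colouring of the `n` pairs, repeated twice, so their colour classes on pairs have the
same sizes; a permutation of the pairs matching them, applied blockwise, lies in `H_n`.
-/

section

variable {n : ℕ}

def pairEquiv (n : ℕ) : Fin n × Fin 2 ≃ Fin (2 * n) :=
  finProdFinEquiv.trans (finCongr (Nat.mul_comm n 2))

lemma pairEquiv_apply_val (k : Fin n) (i : Fin 2) :
    (pairEquiv n (k, i) : ℕ) = 2 * k + i := by
  simp [pairEquiv]; ring

lemma pairPerm_pairEquiv (k : Fin n) (i : Fin 2) :
    pairPerm n (pairEquiv n (k, i)) = pairEquiv n (k, i.rev) := by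
  ext
  simp only [pairPerm, Function.Involutive.coe_toPerm, pairInv, pairEquiv_apply_val, Fin.val_rev]
  omega

lemma pairPerm_eq_permCongr :
    pairPerm n = (pairEquiv n).permCongr (prodCongr 1 Fin.revPerm) := by
  ext x
  obtain ⟨⟨k, i⟩, rfl⟩ := (pairEquiv n).surjective x
  simp [permCongr_apply, pairPerm_pairEquiv]

lemma permCongr_prodCongr_mem_hyperoctahedral (τ : Perm (Fin n)) :
    (pairEquiv n).permCongr (prodCongr τ 1) ∈ hyperoctahedral n := by
  rw [hyperoctahedral, Subgroup.mem_centralizer_singleton_iff, pairPerm_eq_permCongr,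
    ← permCongr_mul, ← permCongr_mul]
  rfl

lemma pairEquiv_mk_zero (k : Fin n) : pairEquiv n (k, 0) = ⟨2 * k, by omega⟩ :=
  Fin.ext (by simp [pairEquiv_apply_val])

lemma pairEquiv_mk_one (k : Fin n) : pairEquiv n (k, 1) = ⟨2 * k + 1, by omega⟩ :=
  Fin.ext (by simp [pairEquiv_apply_val])

lemma pairsEq_iff_forall_pairPerm {α : Type*} (I : Fin (2 * n) → α) (π : Perm (Fin (2 * n))) :
    pairsEq I π ↔ ∀ x, I (π (pairPerm n x)) = I (π x) := by
  constructor
  · intro h x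
    obtain ⟨⟨k, i⟩, rfl⟩ := (pairEquiv n).surjective x
    have hk := h k k.isLt
    rw [pairPerm_pairEquiv]
    fin_cases i
    · simpa [pairEquiv_mk_zero, pairEquiv_mk_one] using hk.symm
    · simpa [pairEquiv_mk_zero, pairEquiv_mk_one] using hk
  · intro h k hk
    have h0 := h (pairEquiv n (⟨k, hk⟩, 0))
    rw [pairPerm_pairEquiv, show Fin.rev (0 : Fin 2) = 1 from rfl, pairEquiv_mk_zero,
      pairEquiv_mk_one] at h0
    exact h0.symm

lemma apply_pairEquiv_eq_of_pairPerm_invariant {β : Type*} {f : Fin (2 * n) → β}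
    (hf : ∀ x, f (pairPerm n x) = f x) (p : Fin n × Fin 2) :
    f (pairEquiv n p) = f (pairEquiv n (p.1, 0)) := by
  obtain ⟨k, i⟩ := p
  fin_cases i
  · rfl
  · rw [← hf, pairPerm_pairEquiv]
    rfl

end

lemma exists_perm_comp_eq_of_card_fiber_eq {α β : Type*} [Fintype α] [DecidableEq β]
    {f g : α → β} (h : ∀ v, Fintype.card {a // f a = v} = Fintype.card {a // g a = v}) :
    ∃ τ : Perm α, ∀ a, g (τ a) = f a :=
  ⟨ofFiberEquiv fun v => Fintype.equivOfCardEq (h v), ofFiberEquiv_map _⟩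

lemma exists_perm_comp_eq_of_comp_fst {α β γ : Type*} [Fintype α] [Fintype γ] [Nonempty γ]
    {f g : α → β} (ρ : Perm (α × γ)) (hρ : ∀ p, g (ρ p).1 = f p.1) :
    ∃ τ : Perm α, ∀ a, g (τ a) = f a := by
  classical
  refine exists_perm_comp_eq_of_card_fiber_eq fun v => ?_
  have hcard : ∀ φ : α → β, Fintype.card {p : α × γ // φ p.1 = v}
      = Fintype.card {a // φ a = v} * Fintype.card γ := fun φ => by
    rw [Fintype.card_congr (prodSubtypeFstEquivSubtypeProd (β := γ) (p := fun a => φ a = v)),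
      Fintype.card_prod]
  have hfg : Fintype.card {p : α × γ // f p.1 = v} = Fintype.card {p : α × γ // g p.1 = v} :=
    Fintype.card_congr (ρ.subtypeEquiv fun p => by rw [hρ])
  rw [hcard, hcard] at hfg
  exact Nat.eq_of_mul_eq_mul_right Fintype.card_pos hfg

lemma exists_mem_hyperoctahedral_comp_eq {n : ℕ} {β : Type*}
    {f g : Fin (2 * n) → β} (hf : ∀ x, f (pairPerm n x) = f x)
    (hg : ∀ x, g (pairPerm n x) = g x) (ρ : Perm (Fin (2 * n))) (hρ : ∀ x, g (ρ x) = f x) :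
    ∃ h ∈ hyperoctahedral n, ∀ x, g (h x) = f x := by
  obtain ⟨τ, hτ⟩ := exists_perm_comp_eq_of_comp_fst (γ := Fin 2)
    (f := fun k => f (pairEquiv n (k, 0))) (g := fun k => g (pairEquiv n (k, 0)))
    ((pairEquiv n).symm.permCongr ρ) fun p => by
      rw [permCongr_apply, symm_symm, ← apply_pairEquiv_eq_of_pairPerm_invariant hg,
        apply_symm_apply, hρ, apply_pairEquiv_eq_of_pairPerm_invariant hf]
  refine ⟨_, permCongr_prodCongr_mem_hyperoctahedral τ, fun x => ?_⟩
  obtain ⟨p, rfl⟩ := (pairEquiv n).surjective x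
  rw [permCongr_apply, symm_apply_apply, apply_pairEquiv_eq_of_pairPerm_invariant hg,
    apply_pairEquiv_eq_of_pairPerm_invariant hf]
  exact hτ p.1

theorem stmt14_general (n d : ℕ) (I : Fin (2*n) → Fin d)
    (σI : Perm (Fin (2*n))) (hσI : isPairPerm σI ∧ pairsEq I σI)
    (σ : Perm (Fin (2*n))) :
    pairsEq I σ ↔
      ∃ γ h : Perm (Fin (2*n)),
        (∀ p, I (σI (γ p)) = I (σI p)) ∧ h ∈ hyperoctahedral n ∧ σ = σI * γ * h := by
  have hI := (pairsEq_iff_forall_pairPerm I σI).1 hσI.2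
  rw [pairsEq_iff_forall_pairPerm]
  constructor
  · intro hσ
    obtain ⟨h, hh, hσh⟩ := exists_mem_hyperoctahedral_comp_eq (f := I ∘ σ) (g := I ∘ σI) hσ hI
      (σI⁻¹ * σ) fun x => by simp
    refine ⟨σI⁻¹ * σ * h⁻¹, h, fun p => ?_, hh, by group⟩
    simpa using (hσh (h⁻¹ p)).symm
  · rintro ⟨γ, h, hγ, hh, rfl⟩ x
    have hcomm : h (pairPerm n x) = pairPerm n (h x) :=
      DFunLike.congr_fun (Subgroup.mem_centralizer_singleton_iff.1 hh) x
    simp only [Perm.mul_apply, hcomm, hγ, hI]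

/-- Let I be a list and σ_I ∈ M_{2n} with δ_I(σ_I) = 1.  Then for σ ∈ M_{2n}:
δ_I(σ) = 1 iff σ ∈ σ_I · Stab · H_n, where Stab is the stabilizer
{γ ∈ S_{2n} : (I∘σ_I)∘γ = I∘σ_I} of the rearranged list I∘σ_I and H_n is the
hyperoctahedral group. -/
theorem stmt14 (n d : ℕ) (hn : 1 ≤ n) (I : Fin (2*n) → Fin d)
    (σI : Perm (Fin (2*n))) (hσI : isPairPerm σI ∧ pairsEq I σI)
    (σ : Perm (Fin (2*n))) (hσ : isPairPerm σ) :
    pairsEq I σ ↔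
      ∃ γ h : Perm (Fin (2*n)),
        (∀ p, I (σI (γ p)) = I (σI p)) ∧ h ∈ hyperoctahedral n ∧ σ = σI * γ * h :=
  stmt14_general n d I σI hσI σ
end
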